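/- The derivation relation ⊢_R (the direct derivation relation determined by the rule set R) is sound and refutation-complete for the fragment R: Θ ⊢_R θ implies Θ ⊨ θ, and every unsatisfiable set Θ of R-formulas satisfies Θ ⊢_R ⊥ for some absurdity ⊥. -/
import Mathlib


/-!
Syllogistic logics (Pratt-Hartmann & Moss, "Logics for the Relational Syllogistic").

Unary atoms and binary atoms are encoded by `ℕ` (two disjoint copies).
-/

namespace Syllogistic

/-- Unary literals: a unary atom `p` or its negation `p̄`. -/
inductive Lit : Type
  | pos : ℕ → Lit
  | neg : ℕ → Lit
deriving DecidableEq

/-- Binary literals: a binary atom `r` or its negation `r̄`. -/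
inductive BLit : Type
  | pos : ℕ → BLit
  | neg : ℕ → BLit
deriving DecidableEq

/-- Bar (negation) on unary literals. -/
def Lit.bar : Lit → Lit
  | .pos p => .neg p
  | .neg p => .pos p

/-- Bar (negation) on binary literals. -/
def BLit.bar : BLit → BLit
  | .pos r => .neg r
  | .neg r => .pos r

/-- A unary literal is positive if it is an atom. -/
def Lit.isPos : Lit → Prop
  | .pos _ => True
  | .neg _ => False

/-- A binary literal is positive if it is an atom. -/
def BLit.isPos : BLit → Prop
  | .pos _ => True
  | .neg _ => False

/-- e-terms: a unary literal `l`, or `∃(l,t)`, or `∀(l,t)`. -/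
inductive ETerm : Type
  | lit : Lit → ETerm
  | ex : Lit → BLit → ETerm
  | al : Lit → BLit → ETerm
deriving DecidableEq

/-- The e-term consisting of a single positive unary atom. -/
def atomE (p : ℕ) : ETerm := .lit (.pos p)

/-- Bar on e-terms: `∀(l,t)‾ = ∃(l,t̄)` and `∃(l,t)‾ = ∀(l,t̄)`. -/
def ETerm.bar : ETerm → ETerm
  | .lit l => .lit l.bar
  | .ex l t => .al l t.bar
  | .al l t => .ex l t.bar

/-- c-terms: a unary literal, or `∃(p,t)`/`∀(p,t)` with `p` a unary atom. -/
def ETerm.isC : ETerm → Prop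
  | .lit _ => True
  | .ex l _ => l.isPos
  | .al l _ => l.isPos

/-- Positive c-terms: the literals occurring in them are positive. -/
def ETerm.isPosC : ETerm → Prop
  | .lit l => l.isPos
  | .ex l t => l.isPos ∧ t.isPos
  | .al l t => l.isPos ∧ t.isPos

/-- R*†-formulas: `∃(e,f)` or `∀(e,f)` for e-terms `e`, `f`. -/
inductive Formula : Type
  | ex : ETerm → ETerm → Formula
  | al : ETerm → ETerm → Formula
deriving DecidableEq

/-- Negation of a formula: `∀(e,f)‾ = ∃(e,f̄)`, `∃(e,f)‾ = ∀(e,f̄)`. -/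
def Formula.bar : Formula → Formula
  | .ex e f => .al e f.bar
  | .al e f => .ex e f.bar

/-- The silent identification: `∃(e,f)` with `∃(f,e)`, and `∀(e,f)` with `∀(f̄,ē)`. -/
def Formula.swap : Formula → Formula
  | .ex e f => .ex f e
  | .al e f => .al f.bar e.bar

/-- Two formulas are identified if they are equal or are swaps of each other. -/
def FormEquiv (φ ψ : Formula) : Prop := ψ = φ ∨ ψ = φ.swap

/-- An absurdity is a formula of the form `∃(e,ē)`. -/
def IsAbsurd (φ : Formula) : Prop := ∃ e : ETerm, φ = .ex e e.bar

/-- A substitution maps unary atoms to unary atoms and binary atoms to binary atoms. -/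
structure Subst where
  u : ℕ → ℕ
  b : ℕ → ℕ

def Lit.subst (g : Subst) : Lit → Lit
  | .pos p => .pos (g.u p)
  | .neg p => .neg (g.u p)

def BLit.subst (g : Subst) : BLit → BLit
  | .pos r => .pos (g.b r)
  | .neg r => .neg (g.b r)

def ETerm.subst (g : Subst) : ETerm → ETerm
  | .lit l => .lit (l.subst g)
  | .ex l t => .ex (l.subst g) (t.subst g)
  | .al l t => .al (l.subst g) (t.subst g)

/-- Atom-wise application of a substitution to a formula. -/
def Formula.subst (g : Subst) : Formula → Formula
  | .ex e f => .ex (e.subst g) (f.subst g)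
  | .al e f => .al (e.subst g) (f.subst g)

/-- A structure over a domain `A`: an interpretation of every unary atom as a
subset of `A` and of every binary atom as a binary relation on `A`.
(Non-emptiness of the domain is imposed where structures are quantified over.) -/
structure Interp (A : Type) where
  up : ℕ → Set A
  br : ℕ → Set (A × A)

def Interp.litI {A : Type} (M : Interp A) : Lit → Set A
  | .pos p => M.up p
  | .neg p => (M.up p)ᶜ

def Interp.blitI {A : Type} (M : Interp A) : BLit → Set (A × A)
  | .pos r => M.br r
  | .neg r => (M.br r)ᶜ

/-- Interpretation of e-terms. -/
def Interp.etermI {A : Type} (M : Interp A) : ETerm → Set A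
  | .lit l => M.litI l
  | .ex l t => {a | ∃ b ∈ M.litI l, (a, b) ∈ M.blitI t}
  | .al l t => {a | ∀ b ∈ M.litI l, (a, b) ∈ M.blitI t}

/-- Truth of a formula in a structure. -/
def Interp.Sat {A : Type} (M : Interp A) : Formula → Prop
  | .al e f => M.etermI e ⊆ M.etermI f
  | .ex e f => (M.etermI e ∩ M.etermI f).Nonempty

/-- Truth of a set of formulas in a structure. -/
def Interp.SatSet {A : Type} (M : Interp A) (Θ : Set Formula) : Prop :=
  ∀ θ ∈ Θ, M.Sat θ

/-- `Θ ⊨ θ`: every structure (with non-empty domain) satisfying `Θ` satisfies `θ`. -/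
def Entails (Θ : Set Formula) (θ : Formula) : Prop :=
  ∀ (A : Type), Nonempty A → ∀ M : Interp A, M.SatSet Θ → M.Sat θ

/-- `Θ` is satisfied in some structure with non-empty domain. -/
def Satisfiable (Θ : Set Formula) : Prop :=
  ∃ (A : Type), Nonempty A ∧ ∃ M : Interp A, M.SatSet Θ

/-- A syllogistic rule: a finite set of antecedents together with a consequent. -/
structure SylRule where
  ants : Finset Formula
  con : Formula

/-- A rule is sound if its antecedents entail its consequent. -/
def SylRule.Sound (R : SylRule) : Prop := Entails (↑R.ants) R.con

/-- A rule is a rule *in* the fragment `F` if all its formulas lie in `F`. -/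
def RuleIn (F : Set Formula) (R : SylRule) : Prop :=
  (∀ ψ ∈ R.ants, ψ ∈ F) ∧ R.con ∈ F

/-- The instance of a rule under a substitution. -/
def SylRule.inst (g : Subst) (R : SylRule) : SylRule :=
  ⟨R.ants.image (Formula.subst g), R.con.subst g⟩

/-- Two rules are the same modulo the identification of formulas. -/
def RuleEquiv (R R' : SylRule) : Prop :=
  (∀ ψ ∈ R.ants, ∃ ψ' ∈ R'.ants, FormEquiv ψ ψ') ∧
  (∀ ψ' ∈ R'.ants, ∃ ψ ∈ R.ants, FormEquiv ψ ψ') ∧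
  FormEquiv R.con R'.con

/-- The direct derivation relation `⊢_X` determined by a set `X` of syllogistic
rules: premises may be used, and instances of rules applied; formulas are
treated up to the silent identification. -/
inductive Derives (X : Set SylRule) : Set Formula → Formula → Prop
  | mem {Θ : Set Formula} {θ : Formula} : θ ∈ Θ → Derives X Θ θ
  | rule {Θ : Set Formula} (R : SylRule) (g : Subst) :
      R ∈ X → (∀ ψ ∈ R.ants, Derives X Θ (ψ.subst g)) →
      Derives X Θ (R.con.subst g)
  | ident {Θ : Set Formula} {φ ψ : Formula} :
      Derives X Θ φ → FormEquiv φ ψ → Derives X Θ ψ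

/-- The indirect derivation relation `⊩_X`: as `⊢_X`, together with
*reductio ad absurdum*. -/
inductive IDerives (X : Set SylRule) : Set Formula → Formula → Prop
  | mem {Θ : Set Formula} {θ : Formula} : θ ∈ Θ → IDerives X Θ θ
  | rule {Θ : Set Formula} (R : SylRule) (g : Subst) :
      R ∈ X → (∀ ψ ∈ R.ants, IDerives X Θ (ψ.subst g)) →
      IDerives X Θ (R.con.subst g)
  | ident {Θ : Set Formula} {φ ψ : Formula} :
      IDerives X Θ φ → FormEquiv φ ψ → IDerives X Θ ψ
  | raa {Θ : Set Formula} {θ b : Formula} :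
      IsAbsurd b → IDerives X (Θ ∪ {θ.bar}) b → IDerives X Θ θ

/-- Soundness of a derivation relation for the fragment `F`. -/
def SoundFor (F : Set Formula) (D : Set Formula → Formula → Prop) : Prop :=
  ∀ (Θ : Set Formula) (θ : Formula), Θ ⊆ F → θ ∈ F → D Θ θ → Entails Θ θ

/-- Completeness of a derivation relation for the fragment `F`. -/
def CompleteFor (F : Set Formula) (D : Set Formula → Formula → Prop) : Prop :=
  ∀ (Θ : Set Formula) (θ : Formula), Θ ⊆ F → θ ∈ F → Entails Θ θ → D Θ θ

/-- Refutation-completeness for the fragment `F`: every unsatisfiable set of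
`F`-formulas derives some absurdity. -/
def RefutationCompleteFor (F : Set Formula) (D : Set Formula → Formula → Prop) : Prop :=
  ∀ Θ : Set Formula, Θ ⊆ F → ¬ Satisfiable Θ → ∃ b, IsAbsurd b ∧ D Θ b

/-- Consistency of a set of formulas with respect to `⊩_X`. -/
def Consistent (X : Set SylRule) (Θ : Set Formula) : Prop :=
  ¬ ∃ b, IsAbsurd b ∧ IDerives X Θ b

/-! ### The six fragments -/

/-- The fragment `S`: `∃(p,l)`, `∃(l,p)`, `∀(p,l)`, `∀(l,p̄)`. -/
def FragS : Set Formula :=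
  {φ | (∃ (p : ℕ) (l : Lit), φ = .ex (atomE p) (.lit l)) ∨
       (∃ (p : ℕ) (l : Lit), φ = .ex (.lit l) (atomE p)) ∨
       (∃ (p : ℕ) (l : Lit), φ = .al (atomE p) (.lit l)) ∨
       (∃ (p : ℕ) (l : Lit), φ = .al (.lit l) (.lit (.neg p)))}

/-- The fragment `S†`: `∃(l,m)`, `∀(l,m)` for unary literals `l`, `m`. -/
def FragSdag : Set Formula :=
  {φ | ∃ l m : Lit, φ = .ex (.lit l) (.lit m) ∨ φ = .al (.lit l) (.lit m)}

/-- The fragment `R`: `∃(p,c)`, `∃(c,p)`, `∀(p,c)`, `∀(c,p̄)` for a c-term `c`. -/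
def FragR : Set Formula :=
  {φ | ∃ (p : ℕ) (c : ETerm), c.isC ∧
       (φ = .ex (atomE p) c ∨ φ = .ex c (atomE p) ∨
        φ = .al (atomE p) c ∨ φ = .al c (.lit (.neg p)))}

/-- The fragment `R†`: `∃(l,e)`, `∃(e,l)`, `∀(l,e)`, `∀(e,l)` for an e-term `e`. -/
def FragRdag : Set Formula :=
  {φ | ∃ (l : Lit) (e : ETerm),
       φ = .ex (.lit l) e ∨ φ = .ex e (.lit l) ∨
       φ = .al (.lit l) e ∨ φ = .al e (.lit l)}

/-- The fragment `R*`: `∃(c⁺,d)`, `∃(d,c⁺)`, `∀(c⁺,d)`, `∀(d,c⁺‾)` with `c⁺` a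
positive c-term and `d` a c-term. -/
def FragRstar : Set Formula :=
  {φ | ∃ c d : ETerm, c.isPosC ∧ d.isC ∧
       (φ = .ex c d ∨ φ = .ex d c ∨ φ = .al c d ∨ φ = .al d c.bar)}

/-- The fragment `R*†`: all formulas. -/
def FragRstardag : Set Formula := Set.univ

/-- The six syllogistic fragments. -/
def IsFragment (F : Set Formula) : Prop :=
  F = FragS ∨ F = FragSdag ∨ F = FragR ∨ F = FragRdag ∨ F = FragRstar ∨ F = FragRstardag

/-! ### Rule sets -/

/-- The rule set `S`: (D1), (D2), (D3), (B), (A), (T), (I), (X). -/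
def RuleSetS : Set SylRule :=
  {R | (∃ (p q : ℕ) (l : Lit),
          R = ⟨{.al (atomE q) (.lit l), .ex (atomE p) (atomE q)}, .ex (atomE p) (.lit l)⟩) ∨
       (∃ (p q : ℕ) (l : Lit),
          R = ⟨{.ex (atomE p) (.lit l), .al (atomE p) (atomE q)}, .ex (atomE q) (.lit l)⟩) ∨
       (∃ (p q : ℕ) (l : Lit),
          R = ⟨{.al (atomE q) (.lit l.bar), .ex (atomE p) (.lit l)}, .ex (atomE p) (.lit (.neg q))⟩) ∨
       (∃ (p q : ℕ) (l : Lit),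
          R = ⟨{.al (atomE p) (atomE q), .al (atomE q) (.lit l)}, .al (atomE p) (.lit l)⟩) ∨
       (∃ (p : ℕ) (l : Lit),
          R = ⟨{.al (atomE p) (.lit (.neg p))}, .al (atomE p) (.lit l)⟩) ∨
       (∃ p : ℕ, R = ⟨∅, .al (atomE p) (atomE p)⟩) ∨
       (∃ (p : ℕ) (l : Lit),
          R = ⟨{.ex (atomE p) (.lit l)}, .ex (atomE p) (atomE p)⟩) ∨
       (∃ φ ψ : Formula, φ ∈ FragS ∧ ψ ∈ FragS ∧ R = ⟨{ψ, ψ.bar}, φ⟩)}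

/-- The rule set `S†`: (D), (B), (A), (T), (I), (N), (X). -/
def RuleSetSdag : Set SylRule :=
  {R | (∃ l m n : Lit,
          R = ⟨{.ex (.lit l) (.lit n), .al (.lit l) (.lit m)}, .ex (.lit m) (.lit n)⟩) ∨
       (∃ l m n : Lit,
          R = ⟨{.al (.lit l) (.lit m), .al (.lit m) (.lit n)}, .al (.lit l) (.lit n)⟩) ∨
       (∃ l m : Lit, R = ⟨{.al (.lit l) (.lit l.bar)}, .al (.lit l) (.lit m)⟩) ∨
       (∃ l : Lit, R = ⟨∅, .al (.lit l) (.lit l)⟩) ∨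
       (∃ l m : Lit, R = ⟨{.ex (.lit l) (.lit m)}, .ex (.lit l) (.lit l)⟩) ∨
       (∃ l : Lit, R = ⟨{.al (.lit l.bar) (.lit l)}, .ex (.lit l) (.lit l)⟩) ∨
       (∃ φ ψ : Formula, φ ∈ FragSdag ∧ ψ ∈ FragSdag ∧ R = ⟨{ψ, ψ.bar}, φ⟩)}

/-- The rules (B), (T) and (A) of the rule set `S†`. -/
def RuleSetBTA : Set SylRule :=
  {R | (∃ l m n : Lit,
          R = ⟨{.al (.lit l) (.lit m), .al (.lit m) (.lit n)}, .al (.lit l) (.lit n)⟩) ∨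
       (∃ l : Lit, R = ⟨∅, .al (.lit l) (.lit l)⟩) ∨
       (∃ l m : Lit, R = ⟨{.al (.lit l) (.lit l.bar)}, .al (.lit l) (.lit m)⟩)}

/-- The rule set `R`: (D1), (D2), (D3), (B), (T), (I), (A), (II), (∀∀), (∃∃), (∀∃). -/
def RuleSetR : Set SylRule :=
  {R | (∃ (p q : ℕ) (c : ETerm), c.isC ∧
          R = ⟨{.ex (atomE p) (atomE q), .al (atomE q) c}, .ex (atomE p) c⟩) ∨
       (∃ (p q : ℕ) (c : ETerm), c.isC ∧
          R = ⟨{.al (atomE p) (atomE q), .ex (atomE p) c}, .ex (atomE q) c⟩) ∨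
       (∃ (p q : ℕ) (c : ETerm), c.isC ∧
          R = ⟨{.al (atomE q) c.bar, .ex (atomE p) c}, .ex (atomE p) (.lit (.neg q))⟩) ∨
       (∃ (p q : ℕ) (c : ETerm), c.isC ∧
          R = ⟨{.al (atomE p) (atomE q), .al (atomE q) c}, .al (atomE p) c⟩) ∨
       (∃ p : ℕ, R = ⟨∅, .al (atomE p) (atomE p)⟩) ∨
       (∃ (p : ℕ) (c : ETerm), c.isC ∧
          R = ⟨{.ex (atomE p) c}, .ex (atomE p) (atomE p)⟩) ∨
       (∃ (p : ℕ) (c : ETerm), c.isC ∧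
          R = ⟨{.al (atomE p) (.lit (.neg p))}, .al (atomE p) c⟩) ∨
       (∃ (p q : ℕ) (t : BLit),
          R = ⟨{.ex (atomE p) (.ex (.pos q) t)}, .ex (atomE q) (atomE q)⟩) ∨
       (∃ (p q q' : ℕ) (t : BLit),
          R = ⟨{.al (atomE p) (.al (.pos q') t), .ex (atomE q) (atomE q')},
               .al (atomE p) (.ex (.pos q) t)⟩) ∨
       (∃ (p q q' : ℕ) (t : BLit),
          R = ⟨{.ex (atomE p) (.ex (.pos q) t), .al (atomE q) (atomE q')},
               .ex (atomE p) (.ex (.pos q') t)⟩) ∨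
       (∃ (p q q' : ℕ) (t : BLit),
          R = ⟨{.al (atomE p) (.ex (.pos q) t), .al (atomE q) (atomE q')},
               .al (atomE p) (.ex (.pos q') t)⟩)}

/-- The rule set `R*`: (T), (I), (B), (D1), (D2), (J), (K), (L), (II), (Z), (W). -/
def RuleSetRstar : Set SylRule :=
  {R | (∃ c : ETerm, c.isPosC ∧ R = ⟨∅, .al c c⟩) ∨
       (∃ c d : ETerm, c.isPosC ∧ d.isC ∧ R = ⟨{.ex c d}, .ex c c⟩) ∨
       (∃ b c d : ETerm, b.isPosC ∧ c.isPosC ∧ d.isC ∧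
          R = ⟨{.al b c, .al c d}, .al b d⟩) ∨
       (∃ b c d : ETerm, b.isPosC ∧ c.isPosC ∧ d.isC ∧
          R = ⟨{.ex b c, .al c d}, .ex b d⟩) ∨
       (∃ b c d : ETerm, b.isPosC ∧ c.isPosC ∧ d.isC ∧
          R = ⟨{.al b c, .ex b d}, .ex c d⟩) ∨
       (∃ p q r : ℕ,
          R = ⟨{.al (atomE p) (atomE q)},
               .al (.al (.pos q) (.pos r)) (.al (.pos p) (.pos r))⟩) ∨
       (∃ p q r : ℕ,
          R = ⟨{.al (atomE p) (atomE q)},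
               .al (.ex (.pos p) (.pos r)) (.ex (.pos q) (.pos r))⟩) ∨
       (∃ p q r : ℕ,
          R = ⟨{.ex (atomE p) (atomE q)},
               .al (.al (.pos p) (.pos r)) (.ex (.pos q) (.pos r))⟩) ∨
       (∃ p q r : ℕ,
          R = ⟨{.ex (atomE q) (.ex (.pos p) (.pos r))}, .ex (atomE p) (atomE p)⟩) ∨
       (∃ (p r : ℕ) (c : ETerm), c.isPosC ∧
          R = ⟨{.al (atomE p) (.lit (.neg p))}, .al c (.al (.pos p) (.pos r))⟩) ∨
       (∃ p r : ℕ,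
          R = ⟨{.al (atomE p) (.lit (.neg p))},
               .ex (.al (.pos p) (.pos r)) (.al (.pos p) (.pos r))⟩)}

/-! ### Auxiliary notions for particular statements -/

/-- Universal S†-formulas. -/
def IsUnivSdag (φ : Formula) : Prop := ∃ l m : Lit, φ = .al (.lit l) (.lit m)

/-- Existential S†-formulas. -/
def IsExSdag (φ : Formula) : Prop := ∃ l m : Lit, φ = .ex (.lit l) (.lit m)

/-- The closure `V^Φ` of a set of unary literals: all `m` with
`Φ ⊢_BTA ∀(l,m)` for some `l ∈ V`. -/
def litClosure (Φ : Set Formula) (V : Set Lit) : Set Lit :=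
  {m | ∃ l ∈ V, Derives RuleSetBTA Φ (.al (.lit l) (.lit m))}

/-- Membership in a set of formulas, modulo the silent identification. -/
def MemMod (Γ : Set Formula) (φ : Formula) : Prop := ∃ ψ ∈ Γ, FormEquiv φ ψ

/-- The reachability relation `c ⇒ d` determined by `Γ`. -/
def Reach (Γ : Set Formula) (c d : ETerm) : Prop :=
  c = d ∨ ∃ (k : ℕ) (p : ℕ → ℕ), c = atomE (p 0) ∧
    MemMod Γ (.al (atomE (p k)) d) ∧
    ∀ i < k, MemMod Γ (.al (atomE (p i)) (atomE (p (i + 1))))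

/-- `V ⇒ d` for a set `V` of c-terms. -/
def ReachSet (Γ : Set Formula) (V : Set ETerm) (d : ETerm) : Prop :=
  ∃ c ∈ V, Reach Γ c d

/-- The witness sets `B_k`; the formal object `b_{V,i}` is encoded as the
pair `(V, i)`. -/
def BSet (Γ : Set Formula) : ℕ → Set (Set ETerm × ℕ)
  | 0 => {x | ∃ (p : ℕ) (c : ETerm), c.isC ∧ MemMod Γ (.ex (atomE p) c) ∧
            x = ({atomE p, c}, 0)}
  | k + 1 => BSet Γ k ∪
      {x | ∃ (p i : ℕ), (i = 1 ∨ i = 2) ∧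
        (∃ y ∈ BSet Γ k, ∃ t : BLit, ReachSet Γ y.1 (.ex (.pos p) t)) ∧
        x = ({atomE p}, i)}

/-- The witness set `B = ⋃_k B_k`. -/
def BAll (Γ : Set Formula) : Set (Set ETerm × ℕ) := ⋃ k, BSet Γ k

/-- Condition (C). -/
def CondC (Γ : Set Formula) : Prop :=
  ∃ (V : Set ETerm) (i : ℕ) (W : Set ETerm) (j : ℕ),
    (V, i) ∈ BAll Γ ∧ (W, j) ∈ BAll Γ ∧
    ∃ q o r : ℕ,
      ((ReachSet Γ V (atomE q) ∧ ReachSet Γ V (.lit (.neg q))) ∨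
       (ReachSet Γ V (.ex (.pos q) (.neg r)) ∧ ReachSet Γ V (.al (.pos o) (.pos r)) ∧
         Reach Γ (atomE q) (atomE o)) ∨
       (ReachSet Γ V (.al (.pos q) (.neg r)) ∧ ReachSet Γ V (.ex (.pos o) (.pos r)) ∧
         Reach Γ (atomE o) (atomE q)) ∨
       (ReachSet Γ V (.al (.pos q) (.neg r)) ∧ ReachSet Γ V (.al (.pos o) (.pos r)) ∧
         ReachSet Γ W (atomE q) ∧ ReachSet Γ W (atomE o)))

/-- The set `Γ` of R-formulas used in the proof that `R` admits no sound
and complete direct syllogistic system (indices `0,…,n-1`). -/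
def GammaSet (n : ℕ) (p : ℕ → ℕ) (r : ℕ) : Set Formula :=
  {φ | (∃ i, i + 1 < n ∧ φ = .al (atomE (p i)) (.ex (.pos (p (i + 1))) (.pos r))) ∨
       φ = .al (atomE (p 0)) (.al (.pos (p (n - 1))) (.pos r)) ∨
       (∃ q : ℕ, φ = .al (atomE q) (atomE q)) ∨
       (∃ i j, i < j ∧ j < n ∧ φ = .al (atomE (p i)) (.lit (.neg (p j))))}

/-- `Γ` is R*-complete: for every R*-formula `θ`, `θ ∈ Γ` or `θ̄ ∈ Γ`. -/
def RstarComplete (Γ : Set Formula) : Prop :=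
  ∀ θ ∈ FragRstar, θ ∈ Γ ∨ Formula.bar θ ∈ Γ

/-- Domain of the canonical structure for `Γ`: triples `(c₁,c₂,Q)` of two
positive c-terms and a quantifier (`Bool`, with `true` rendering `∃` and
`false` rendering `∀`) such that `Γ ⊩_{R*} ∃(c₁,c₂)`. -/
abbrev CanonA (Γ : Set Formula) : Type :=
  {x : ETerm × ETerm × Bool //
    x.1.isPosC ∧ x.2.1.isPosC ∧ IDerives RuleSetRstar Γ (.ex x.1 x.2.1)}

/-- The canonical structure constructed from `Γ`. -/
def CanonInterp (Γ : Set Formula) : Interp (CanonA Γ) where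
  up p := {x | IDerives RuleSetRstar Γ (.al x.val.1 (atomE p)) ∨
               IDerives RuleSetRstar Γ (.al x.val.2.1 (atomE p))}
  br r := {ab |
      (∃ c ∈ ({ab.1.val.1, ab.1.val.2.1} : Set ETerm),
       ∃ d ∈ ({ab.2.val.1, ab.2.val.2.1} : Set ETerm),
       ∃ q : ℕ,
         IDerives RuleSetRstar Γ (.al c (.al (.pos q) (.pos r))) ∧
         IDerives RuleSetRstar Γ (.al d (atomE q))) ∨
      (ab.2.val.2.2 = true ∧
       ∃ q : ℕ, ab.2.val.1 = atomE q ∧ ab.2.val.2.1 = atomE q ∧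
       ∃ c ∈ ({ab.1.val.1, ab.1.val.2.1} : Set ETerm),
         IDerives RuleSetRstar Γ (.al c (.ex (.pos q) (.pos r))))}


/-! ### Auxiliary development for Statement 3 -/

section RAux

@[simp] lemma Lit.bar_bar (l : Lit) : l.bar.bar = l := by cases l <;> rfl
@[simp] lemma BLit.bar_bar (t : BLit) : t.bar.bar = t := by cases t <;> rfl
@[simp] lemma ETerm.bar_bar (e : ETerm) : e.bar.bar = e := by
  cases e <;> simp [ETerm.bar]
lemma BLit.bar_ne (t : BLit) : t.bar ≠ t := by cases t <;> simp [BLit.bar]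

def idSub : Subst := ⟨id, id⟩
@[simp] lemma Lit.subst_id (l : Lit) : l.subst idSub = l := by cases l <;> rfl
@[simp] lemma BLit.subst_id (t : BLit) : t.subst idSub = t := by cases t <;> rfl
@[simp] lemma ETerm.subst_id (e : ETerm) : e.subst idSub = e := by
  cases e <;> simp [ETerm.subst]
@[simp] lemma Formula.subst_id (φ : Formula) : φ.subst idSub = φ := by
  cases φ <;> simp [Formula.subst]

lemma Lit.bar_subst (g : Subst) (l : Lit) : l.bar.subst g = (l.subst g).bar := by
  cases l <;> rfl
lemma BLit.bar_subst (g : Subst) (t : BLit) : t.bar.subst g = (t.subst g).bar := by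
  cases t <;> rfl
lemma ETerm.bar_subst (g : Subst) (e : ETerm) : e.bar.subst g = (e.subst g).bar := by
  cases e <;> simp [ETerm.bar, ETerm.subst, Lit.bar_subst, BLit.bar_subst]

lemma ETerm.isC_bar {c : ETerm} (hc : c.isC) : c.bar.isC := by
  cases c with
  | lit l => trivial
  | ex l t => exact hc
  | al l t => exact hc

variable {A : Type} (M : Interp A)

@[simp] lemma Interp.litI_bar (l : Lit) : M.litI l.bar = (M.litI l)ᶜ := by
  cases l <;> simp [Interp.litI, Lit.bar]
@[simp] lemma Interp.blitI_bar (t : BLit) : M.blitI t.bar = (M.blitI t)ᶜ := by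
  cases t <;> simp [Interp.blitI, BLit.bar]

lemma Interp.etermI_bar (e : ETerm) : M.etermI e.bar = (M.etermI e)ᶜ := by
  cases e with
  | lit l => simp [Interp.etermI, ETerm.bar]
  | ex l t =>
      ext a
      simp [Interp.etermI, ETerm.bar, Set.mem_compl_iff, not_exists]
  | al l t =>
      ext a
      simp only [Interp.etermI, ETerm.bar, Interp.blitI_bar, Set.mem_setOf_eq,
        Set.mem_compl_iff]
      push_neg
      rfl

lemma Interp.sat_swap {φ : Formula} : M.Sat φ.swap ↔ M.Sat φ := by
  cases φ with
  | ex e f =>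
      simp only [Formula.swap, Interp.Sat]
      rw [Set.inter_comm]
  | al e f =>
      simp only [Formula.swap, Interp.Sat, Interp.etermI_bar]
      exact Set.compl_subset_compl

lemma Interp.sat_equiv {φ ψ : Formula} (h : FormEquiv φ ψ) : M.Sat φ ↔ M.Sat ψ := by
  rcases h with rfl | rfl
  · rfl
  · exact (M.sat_swap).symm

end RAux

section RSound

theorem soundnessR : ∀ (Θ : Set Formula) (θ : Formula),
    Derives RuleSetR Θ θ → Entails Θ θ := by
  intro Θ θ h
  induction h with
  | mem h => exact fun A hA M hM => hM _ h
  | ident h he ih =>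
      intro A hA M hM
      exact (M.sat_equiv he).mp (ih A hA M hM)
  | rule R g hR hants ih =>
      intro A hA M hM
      have hs : ∀ ψ ∈ R.ants, M.Sat (ψ.subst g) := fun ψ hψ => ih ψ hψ A hA M hM
      clear ih hants hM
      rcases hR with ⟨p,q,c,hc,rfl⟩|⟨p,q,c,hc,rfl⟩|⟨p,q,c,hc,rfl⟩|⟨p,q,c,hc,rfl⟩|
        ⟨p,rfl⟩|⟨p,c,hc,rfl⟩|⟨p,c,hc,rfl⟩|⟨p,q,t,rfl⟩|⟨p,q,q',t,rfl⟩|⟨p,q,q',t,rfl⟩|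
        ⟨p,q,q',t,rfl⟩
      -- (D1)
      · have h1 := hs (.ex (atomE p) (atomE q)) (by simp)
        have h2 := hs (.al (atomE q) c) (by simp)
        simp only [Formula.subst, ETerm.subst, Lit.subst, atomE, Interp.Sat] at h1 h2 ⊢
        obtain ⟨a, ha1, ha2⟩ := h1
        exact ⟨a, ha1, h2 ha2⟩
      -- (D2)
      · have h1 := hs (.al (atomE p) (atomE q)) (by simp)
        have h2 := hs (.ex (atomE p) c) (by simp)
        simp only [Formula.subst, ETerm.subst, Lit.subst, atomE, Interp.Sat] at h1 h2 ⊢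
        obtain ⟨a, ha1, ha2⟩ := h2
        exact ⟨a, h1 ha1, ha2⟩
      -- (D3)
      · have h1 := hs (.al (atomE q) c.bar) (by simp)
        have h2 := hs (.ex (atomE p) c) (by simp)
        simp only [Formula.subst] at h1 h2
        rw [ETerm.bar_subst] at h1
        simp only [ETerm.subst, Lit.subst, atomE, Interp.Sat] at h1 h2 ⊢
        rw [Interp.etermI_bar] at h1
        obtain ⟨a, hap, hac⟩ := h2
        refine ⟨a, hap, ?_⟩
        simp only [Interp.etermI, Interp.litI, Set.mem_compl_iff]
        intro haq
        exact h1 haq hac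
      -- (B)
      · have h1 := hs (.al (atomE p) (atomE q)) (by simp)
        have h2 := hs (.al (atomE q) c) (by simp)
        simp only [Formula.subst, ETerm.subst, Lit.subst, atomE, Interp.Sat] at h1 h2 ⊢
        exact h1.trans h2
      -- (T)
      · simp only [Formula.subst, ETerm.subst, Lit.subst, atomE, Interp.Sat]
        exact fun a ha => ha
      -- (I)
      · have h1 := hs (.ex (atomE p) c) (by simp)
        simp only [Formula.subst, ETerm.subst, Lit.subst, atomE, Interp.Sat] at h1 ⊢
        obtain ⟨a, ha, _⟩ := h1
        exact ⟨a, ha, ha⟩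
      -- (A)
      · have h1 := hs (.al (atomE p) (.lit (.neg p))) (by simp)
        simp only [Formula.subst, ETerm.subst, Lit.subst, atomE, Interp.Sat] at h1 ⊢
        intro a ha
        have := h1 ha
        simp only [Interp.etermI, Interp.litI, Set.mem_compl_iff] at this
        exact absurd ha this
      -- (II)
      · have h1 := hs (.ex (atomE p) (.ex (.pos q) t)) (by simp)
        simp only [Formula.subst, ETerm.subst, Lit.subst, atomE, Interp.Sat,
          Interp.etermI, Interp.litI] at h1 ⊢
        obtain ⟨a, _, b, hb, _⟩ := h1
        exact ⟨b, hb, hb⟩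
      -- (∀∀)
      · have h1 := hs (.al (atomE p) (.al (.pos q') t)) (by simp)
        have h2 := hs (.ex (atomE q) (atomE q')) (by simp)
        simp only [Formula.subst, ETerm.subst, Lit.subst, atomE, Interp.Sat,
          Interp.etermI, Interp.litI] at h1 h2 ⊢
        intro a ha
        obtain ⟨b, hbq, hbq'⟩ := h2
        exact ⟨b, hbq, h1 ha b hbq'⟩
      -- (∃∃)
      · have h1 := hs (.ex (atomE p) (.ex (.pos q) t)) (by simp)
        have h2 := hs (.al (atomE q) (atomE q')) (by simp)
        simp only [Formula.subst, ETerm.subst, Lit.subst, atomE, Interp.Sat,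
          Interp.etermI, Interp.litI] at h1 h2 ⊢
        obtain ⟨a, ha, b, hb, hab⟩ := h1
        exact ⟨a, ha, b, h2 hb, hab⟩
      -- (∀∃)
      · have h1 := hs (.al (atomE p) (.ex (.pos q) t)) (by simp)
        have h2 := hs (.al (atomE q) (atomE q')) (by simp)
        simp only [Formula.subst, ETerm.subst, Lit.subst, atomE, Interp.Sat,
          Interp.etermI, Interp.litI] at h1 h2 ⊢
        intro a ha
        obtain ⟨b, hb, hab⟩ := h1 ha
        exact ⟨b, h2 hb, hab⟩

end RSound

section RDerive

variable {Θ : Set Formula}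

abbrev DD (Θ : Set Formula) (φ : Formula) : Prop := Derives RuleSetR Θ φ

lemma apply_rule {R : SylRule} (hR : R ∈ RuleSetR) (h : ∀ ψ ∈ R.ants, DD Θ ψ) :
    DD Θ R.con := by
  have := Derives.rule (X := RuleSetR) (Θ := Θ) R idSub hR
    (fun ψ hψ => by rw [Formula.subst_id]; exact h ψ hψ)
  rwa [Formula.subst_id] at this

lemma apply_rule₀ {con : Formula} (hR : (⟨∅, con⟩ : SylRule) ∈ RuleSetR) : DD Θ con :=
  apply_rule hR (by intro ψ hψ; simp at hψ)

lemma apply_rule₁ {a1 con : Formula} (hR : (⟨{a1}, con⟩ : SylRule) ∈ RuleSetR)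
    (h1 : DD Θ a1) : DD Θ con :=
  apply_rule hR (by intro ψ hψ; rw [Finset.mem_singleton] at hψ; rw [hψ]; exact h1)

lemma apply_rule₂ {a1 a2 con : Formula} (hR : (⟨{a1, a2}, con⟩ : SylRule) ∈ RuleSetR)
    (h1 : DD Θ a1) (h2 : DD Θ a2) : DD Θ con := by
  refine apply_rule hR ?_
  intro ψ hψ
  rcases Finset.mem_insert.mp hψ with rfl | hψ
  · exact h1
  · rw [Finset.mem_singleton.mp hψ]; exact h2

lemma dswapEx {e f : ETerm} (h : DD Θ (.ex e f)) : DD Θ (.ex f e) :=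
  Derives.ident h (Or.inr rfl)

lemma dD1 {p q : ℕ} {c : ETerm} (hc : c.isC)
    (h1 : DD Θ (.ex (atomE p) (atomE q))) (h2 : DD Θ (.al (atomE q) c)) :
    DD Θ (.ex (atomE p) c) :=
  apply_rule₂ (Or.inl ⟨p, q, c, hc, rfl⟩) h1 h2

lemma dD2 {p q : ℕ} {c : ETerm} (hc : c.isC)
    (h1 : DD Θ (.al (atomE p) (atomE q))) (h2 : DD Θ (.ex (atomE p) c)) :
    DD Θ (.ex (atomE q) c) :=
  apply_rule₂ (Or.inr (Or.inl ⟨p, q, c, hc, rfl⟩)) h1 h2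

lemma dD3 {p q : ℕ} {c : ETerm} (hc : c.isC)
    (h1 : DD Θ (.al (atomE q) c.bar)) (h2 : DD Θ (.ex (atomE p) c)) :
    DD Θ (.ex (atomE p) (.lit (.neg q))) :=
  apply_rule₂ (Or.inr (Or.inr (Or.inl ⟨p, q, c, hc, rfl⟩))) h1 h2

lemma dB {p q : ℕ} {c : ETerm} (hc : c.isC)
    (h1 : DD Θ (.al (atomE p) (atomE q))) (h2 : DD Θ (.al (atomE q) c)) :
    DD Θ (.al (atomE p) c) :=
  apply_rule₂ (Or.inr (Or.inr (Or.inr (Or.inl ⟨p, q, c, hc, rfl⟩)))) h1 h2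

lemma dT (p : ℕ) : DD Θ (.al (atomE p) (atomE p)) :=
  apply_rule₀ (Or.inr (Or.inr (Or.inr (Or.inr (Or.inl ⟨p, rfl⟩)))))

lemma dI {p : ℕ} {c : ETerm} (hc : c.isC) (h : DD Θ (.ex (atomE p) c)) :
    DD Θ (.ex (atomE p) (atomE p)) :=
  apply_rule₁ (Or.inr (Or.inr (Or.inr (Or.inr (Or.inr (Or.inl ⟨p, c, hc, rfl⟩)))))) h

lemma dII {p q : ℕ} {t : BLit} (h : DD Θ (.ex (atomE p) (.ex (.pos q) t))) :
    DD Θ (.ex (atomE q) (atomE q)) :=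
  apply_rule₁
    (Or.inr (Or.inr (Or.inr (Or.inr (Or.inr (Or.inr (Or.inr (Or.inl ⟨p, q, t, rfl⟩)))))))) h

lemma dAA {p q q' : ℕ} {t : BLit} (h1 : DD Θ (.al (atomE p) (.al (.pos q') t)))
    (h2 : DD Θ (.ex (atomE q) (atomE q'))) :
    DD Θ (.al (atomE p) (.ex (.pos q) t)) :=
  apply_rule₂
    (Or.inr (Or.inr (Or.inr (Or.inr (Or.inr (Or.inr (Or.inr (Or.inr
      (Or.inl ⟨p, q, q', t, rfl⟩))))))))) h1 h2

lemma dEE {p q q' : ℕ} {t : BLit} (h1 : DD Θ (.ex (atomE p) (.ex (.pos q) t)))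
    (h2 : DD Θ (.al (atomE q) (atomE q'))) :
    DD Θ (.ex (atomE p) (.ex (.pos q') t)) :=
  apply_rule₂
    (Or.inr (Or.inr (Or.inr (Or.inr (Or.inr (Or.inr (Or.inr (Or.inr (Or.inr
      (Or.inl ⟨p, q, q', t, rfl⟩)))))))))) h1 h2

lemma dAE {p q q' : ℕ} {t : BLit} (h1 : DD Θ (.al (atomE p) (.ex (.pos q) t)))
    (h2 : DD Θ (.al (atomE q) (atomE q'))) :
    DD Θ (.al (atomE p) (.ex (.pos q') t)) :=
  apply_rule₂
    (Or.inr (Or.inr (Or.inr (Or.inr (Or.inr (Or.inr (Or.inr (Or.inr (Or.inr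
      (Or.inr ⟨p, q, q', t, rfl⟩)))))))))) h1 h2

lemma dContra {u : ℕ} {c : ETerm} (hc : c.isC)
    (hcon : ∀ v : ℕ, ¬ DD Θ (.ex (atomE v) (.lit (.neg v))))
    (h1 : DD Θ (.al (atomE u) c.bar)) (h2 : DD Θ (.ex (atomE u) c)) : False :=
  hcon u (dD3 hc h1 h2)

end RDerive

section RCanon

/-- Domain of the canonical model for the completeness proof for `R`. -/
inductive Dom (Θ : Set Formula) : Type
  | star : Dom Θ
  | elem (p : ℕ) (c : ETerm) (hc : c.isC)
      (h : Derives RuleSetR Θ (.ex (atomE p) c)) : Dom Θ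
  | wit (q : ℕ) (t : BLit)
      (h : Derives RuleSetR Θ (.ex (atomE q) (atomE q))) : Dom Θ

variable {Θ : Set Formula}

def Dom.bases : Dom Θ → Set ℕ
  | .star => ∅
  | .elem p c _ _ => insert p {q | c = .lit (.pos q)}
  | .wit q _ _ => {q}

def Dom.cOf : Dom Θ → ETerm
  | .elem _ c _ _ => c
  | _ => .lit (.pos 0)

def Dom.tOf : Dom Θ → BLit
  | .wit _ t _ => t
  | _ => .pos 0

def memA (Θ : Set Formula) (x : Dom Θ) (u : ℕ) : Prop :=
  ∃ b ∈ x.bases, DD Θ (.al (atomE b) (atomE u))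

def AlCon (Θ : Set Formula) (x : Dom Θ) (q : ℕ) (t : BLit) : Prop :=
  (∃ b ∈ x.bases, DD Θ (.al (atomE b) (.al (.pos q) t))) ∨
  (∃ p hc h, x = Dom.elem p (.al (.pos q) t) hc h)

def ExCon (Θ : Set Formula) (x : Dom Θ) (q : ℕ) (t : BLit) : Prop :=
  (∃ b ∈ x.bases, DD Θ (.al (atomE b) (.ex (.pos q) t))) ∨
  (∃ p hc h, x = Dom.elem p (.ex (.pos q) t) hc h)

def CanonM (Θ : Set Formula) : Interp (Dom Θ) where
  up u := {x | memA Θ x u}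
  br r := {ab | (∃ q, AlCon Θ ab.1 q (.pos r) ∧ memA Θ ab.2 q) ∨
                (∃ q h, ab.2 = Dom.wit q (.pos r) h ∧ ExCon Θ ab.1 q (.pos r))}

lemma bases_ex {x : Dom Θ} {b b' : ℕ} (hb : b ∈ x.bases) (hb' : b' ∈ x.bases) :
    DD Θ (.ex (atomE b) (atomE b')) := by
  cases x with
  | star => exact absurd hb (by simp [Dom.bases])
  | elem p c hc h =>
      simp only [Dom.bases, Set.mem_insert_iff, Set.mem_setOf_eq] at hb hb'
      rcases hb with rfl | hb
      · rcases hb' with rfl | hb'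
        · exact dI hc h
        · rw [hb'] at h; exact h
      · rcases hb' with rfl | hb'
        · rw [hb] at h; exact dswapEx h
        · rw [hb] at hb'
          obtain rfl : b = b' := by
            injection hb' with h1; injection h1
          rw [hb] at h
          exact dI (c := atomE p) trivial (dswapEx h)
  | wit q t h =>
      simp only [Dom.bases, Set.mem_singleton_iff] at hb hb'
      subst hb; subst hb'
      exact h

variable (hcon : ∀ v : ℕ, ¬ DD Θ (.ex (atomE v) (.lit (.neg v))))
include hcon

lemma mem_neg {x : Dom Θ} {u b : ℕ} (hb : b ∈ x.bases)
    (h : DD Θ (.al (atomE b) (.lit (.neg u)))) (hm : memA Θ x u) : False := by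
  obtain ⟨b', hb', h'⟩ := hm
  have e1 : DD Θ (.ex (atomE b) (atomE u)) := dD1 trivial (bases_ex hb hb') h'
  exact dContra (c := atomE u) trivial hcon h e1

lemma H1 {b b' q1 q2 s : ℕ} {t : BLit}
    (e0 : DD Θ (.ex (atomE b) (atomE b')))
    (e1 : DD Θ (.al (atomE b) (.al (.pos q1) t)))
    (e2 : DD Θ (.al (atomE b') (.al (.pos q2) t.bar)))
    (e3 : DD Θ (.ex (atomE s) (atomE q1)))
    (e4 : DD Θ (.al (atomE s) (atomE q2))) : False := by
  have f1 : DD Θ (.al (atomE b) (.ex (.pos s) t)) := dAA e1 e3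
  have f2 : DD Θ (.ex (atomE b') (.ex (.pos s) t)) := dD1 trivial (dswapEx e0) f1
  have f3 : DD Θ (.ex (atomE b') (.ex (.pos q2) t)) := dEE f2 e4
  exact dContra (c := .ex (.pos q2) t) trivial hcon e2 f3

lemma H2 {p q1 q2 s : ℕ} {t : BLit}
    (e1 : DD Θ (.al (atomE p) (.al (.pos q1) t)))
    (e2 : DD Θ (.ex (atomE p) (.al (.pos q2) t.bar)))
    (e3 : DD Θ (.ex (atomE s) (atomE q1)))
    (e4 : DD Θ (.al (atomE s) (atomE q2))) : False := by
  have f1 : DD Θ (.al (atomE p) (.ex (.pos s) t)) := dAA e1 e3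
  have f2 : DD Θ (.al (atomE p) (.ex (.pos q2) t)) := dAE f1 e4
  refine dContra (c := .al (.pos q2) t.bar) trivial hcon ?_ e2
  simpa [ETerm.bar] using f2

lemma H3 {b b' q1 q2 : ℕ} {t : BLit}
    (e0 : DD Θ (.ex (atomE b) (atomE b')))
    (e1 : DD Θ (.al (atomE b) (.ex (.pos q1) t)))
    (e2 : DD Θ (.al (atomE b') (.al (.pos q2) t.bar)))
    (e3 : DD Θ (.al (atomE q1) (atomE q2))) : False := by
  have f1 : DD Θ (.ex (atomE b') (.ex (.pos q1) t)) := dD1 trivial (dswapEx e0) e1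
  have f2 : DD Θ (.ex (atomE b') (.ex (.pos q2) t)) := dEE f1 e3
  exact dContra (c := .ex (.pos q2) t) trivial hcon e2 f2

lemma H4 {p q1 q2 : ℕ} {t : BLit}
    (e1 : DD Θ (.al (atomE p) (.al (.pos q2) t.bar)))
    (e2 : DD Θ (.ex (atomE p) (.ex (.pos q1) t)))
    (e3 : DD Θ (.al (atomE q1) (atomE q2))) : False := by
  have f2 : DD Θ (.ex (atomE p) (.ex (.pos q2) t)) := dEE e2 e3
  exact dContra (c := .ex (.pos q2) t) trivial hcon e1 f2

lemma H5 {p q1 q2 : ℕ} {t : BLit}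
    (e1 : DD Θ (.ex (atomE p) (.al (.pos q2) t.bar)))
    (e2 : DD Θ (.al (atomE p) (.ex (.pos q1) t)))
    (e3 : DD Θ (.al (atomE q1) (atomE q2))) : False := by
  have f2 : DD Θ (.al (atomE p) (.ex (.pos q2) t)) := dAE e2 e3
  refine dContra (c := .al (.pos q2) t.bar) trivial hcon ?_ e1
  simpa [ETerm.bar] using f2

lemma C1 {x y : Dom Θ} {q1 q2 : ℕ} {t : BLit}
    (a1 : AlCon Θ x q1 t) (a2 : AlCon Θ x q2 t.bar)
    (m1 : memA Θ y q1) (m2 : memA Θ y q2) : False := by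
  obtain ⟨s1, hs1, g1⟩ := m1
  obtain ⟨s2, hs2, g2⟩ := m2
  have hss : DD Θ (.ex (atomE s1) (atomE s2)) := bases_ex hs1 hs2
  have e3 : DD Θ (.ex (atomE s2) (atomE q1)) := dswapEx (dD2 trivial g1 hss)
  rcases a1 with ⟨b1, hb1, f1⟩ | ⟨p, hpc, hpd, hx⟩
  · rcases a2 with ⟨b2, hb2, f2⟩ | ⟨p, hpc, hpd, hx⟩
    · exact H1 hcon (bases_ex hb1 hb2) f1 f2 e3 g2
    · subst hx
      obtain rfl : b1 = p := by simpa [Dom.bases] using hb1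
      exact H2 hcon f1 hpd e3 g2
  · subst hx
    rcases a2 with ⟨b2, hb2, f2⟩ | ⟨p', hpc', hpd', hx'⟩
    · obtain rfl : b2 = p := by simpa [Dom.bases] using hb2
      have e3' : DD Θ (.ex (atomE s1) (atomE q2)) := dD1 trivial hss g2
      refine H2 (t := t.bar) hcon f2 ?_ e3' g1
      simpa using hpd
    · have hc2 := congrArg Dom.cOf hx'
      simp only [Dom.cOf] at hc2
      injection hc2 with h5 h6
      exact BLit.bar_ne t h6.symm

lemma C2 {x : Dom Θ} {q1 q2 : ℕ} {t : BLit}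
    (a1 : ExCon Θ x q1 t) (a2 : AlCon Θ x q2 t.bar)
    (hq : DD Θ (.al (atomE q1) (atomE q2))) : False := by
  rcases a1 with ⟨b1, hb1, f1⟩ | ⟨p, hpc, hpd, hx⟩
  · rcases a2 with ⟨b2, hb2, f2⟩ | ⟨p, hpc, hpd, hx⟩
    · exact H3 hcon (bases_ex hb1 hb2) f1 f2 hq
    · subst hx
      obtain rfl : b1 = p := by simpa [Dom.bases] using hb1
      exact H5 hcon hpd f1 hq
  · subst hx
    rcases a2 with ⟨b2, hb2, f2⟩ | ⟨p', hpc', hpd', hx'⟩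
    · obtain rfl : b2 = p := by simpa [Dom.bases] using hb2
      exact H4 hcon f2 hpd hq
    · have hc2 := congrArg Dom.cOf hx'
      simp only [Dom.cOf] at hc2
      exact ETerm.noConfusion hc2

omit hcon in
lemma exCon_qq {x : Dom Θ} {q : ℕ} {t : BLit} (hx : ExCon Θ x q t) :
    DD Θ (.ex (atomE q) (atomE q)) := by
  rcases hx with ⟨b, hb, f⟩ | ⟨p, hc, h, hx⟩
  · exact dII (dD1 trivial (bases_ex hb hb) f)
  · exact dII h

lemma edge_Al {x y : Dom Θ} {q : ℕ} {t : BLit} (hA : AlCon Θ x q t) (hm : memA Θ y q) :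
    (x, y) ∈ (CanonM Θ).blitI t := by
  cases t with
  | pos r => exact Or.inl ⟨q, hA, hm⟩
  | neg r =>
      simp only [Interp.blitI, Set.mem_compl_iff]
      intro hmem
      rcases hmem with ⟨q1, hA1, hm1⟩ | ⟨q2, h2, hy, hE2⟩
      · exact C1 (t := BLit.pos r) hcon hA1 hA hm1 hm
      · subst hy
        obtain ⟨b, hb, hbq⟩ := hm
        obtain rfl : b = q2 := by simpa [Dom.bases] using hb
        exact C2 (t := BLit.pos r) hcon hE2 hA hbq

lemma edge_Ex {x : Dom Θ} {q : ℕ} {t : BLit} (hE : ExCon Θ x q t) :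
    ∃ y : Dom Θ, memA Θ y q ∧ (x, y) ∈ (CanonM Θ).blitI t := by
  have hqq := exCon_qq hE
  refine ⟨Dom.wit q t hqq, ⟨q, by simp [Dom.bases], dT q⟩, ?_⟩
  cases t with
  | pos r => exact Or.inr ⟨q, hqq, rfl, hE⟩
  | neg r =>
      simp only [Interp.blitI, Set.mem_compl_iff]
      intro hmem
      rcases hmem with ⟨q1, hA1, hm1⟩ | ⟨q2, h2, hy, hE2⟩
      · obtain ⟨b, hb, hbq⟩ := hm1
        obtain rfl : b = q := by simpa [Dom.bases] using hb
        exact C2 (t := BLit.neg r) hcon hE hA1 hbq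
      · have ht2 := congrArg Dom.tOf hy
        simp only [Dom.tOf] at ht2
        exact BLit.noConfusion ht2

lemma satAl {x : Dom Θ} {b : ℕ} {c : ETerm} (hc : c.isC) (hb : b ∈ x.bases)
    (h : DD Θ (.al (atomE b) c)) : x ∈ (CanonM Θ).etermI c := by
  match c, hc with
  | .lit (.pos u), _ => exact ⟨b, hb, h⟩
  | .lit (.neg u), _ =>
      intro hm
      exact mem_neg hcon hb h hm
  | .ex (.pos u) t, _ =>
      obtain ⟨y, hy, hxy⟩ := edge_Ex hcon (Or.inl ⟨b, hb, h⟩)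
      exact ⟨y, hy, hxy⟩
  | .al (.pos u) t, _ =>
      intro y hy
      exact edge_Al hcon (Or.inl ⟨b, hb, h⟩) hy

lemma satSelf {p : ℕ} {c : ETerm} (hc : c.isC) (h : DD Θ (.ex (atomE p) c)) :
    (Dom.elem p c hc h : Dom Θ) ∈ (CanonM Θ).etermI c := by
  match c, hc, h with
  | .lit (.pos u), _, h =>
      exact ⟨u, Set.mem_insert_iff.mpr (Or.inr rfl), dT u⟩
  | .lit (.neg u), _, h =>
      intro hm
      obtain ⟨b, hb, hbu⟩ := hm
      obtain rfl : b = p := by simpa [Dom.bases] using hb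
      exact hcon u (dD2 (c := ETerm.lit (.neg u)) trivial hbu h)
  | .ex (.pos u) t, hc, h =>
      obtain ⟨y, hy, hxy⟩ := edge_Ex hcon (Or.inr ⟨p, hc, h, rfl⟩)
      exact ⟨y, hy, hxy⟩
  | .al (.pos u) t, hc, h =>
      intro y hy
      exact edge_Al hcon (Or.inr ⟨p, hc, h, rfl⟩) hy

lemma canon_satset (hΘ : Θ ⊆ FragR) : (CanonM Θ).SatSet Θ := by
  intro θ hθ
  have hd : DD Θ θ := Derives.mem hθ
  obtain ⟨p, c, hc, hsh⟩ := hΘ hθ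
  rcases hsh with rfl | rfl | rfl | rfl
  · exact ⟨Dom.elem p c hc hd, ⟨p, Set.mem_insert _ _, dT p⟩, satSelf hcon hc hd⟩
  · have hd' : DD Θ (.ex (atomE p) c) := dswapEx hd
    exact ⟨Dom.elem p c hc hd', satSelf hcon hc hd', ⟨p, Set.mem_insert _ _, dT p⟩⟩
  · intro x hx
    obtain ⟨b, hb, hbp⟩ := hx
    exact satAl hcon hc hb (dB hc hbp hd)
  · intro x hx hm
    have hd' : DD Θ (.al (atomE p) c.bar) := Derives.ident hd (Or.inr rfl)
    obtain ⟨b, hb, hbp⟩ := hm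
    have hbar := satAl hcon (ETerm.isC_bar hc) hb (dB (ETerm.isC_bar hc) hbp hd')
    rw [Interp.etermI_bar] at hbar
    exact hbar hx

end RCanon

theorem R_sound_and_refutation_complete' :
    (∀ (Θ : Set Formula) (θ : Formula), Derives RuleSetR Θ θ → Entails Θ θ) ∧
    (∀ Θ : Set Formula, Θ ⊆ FragR → ¬ Satisfiable Θ →
        ∃ b, IsAbsurd b ∧ Derives RuleSetR Θ b) := by
  refine ⟨soundnessR, ?_⟩
  intro Θ hΘ hsat
  by_contra hc
  push_neg at hc
  have hcon : ∀ v : ℕ, ¬ DD Θ (.ex (atomE v) (.lit (.neg v))) :=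
    fun v hv => hc _ ⟨atomE v, rfl⟩ hv
  exact hsat ⟨Dom Θ, ⟨Dom.star⟩, CanonM Θ, canon_satset hcon hΘ⟩

/-- `⊢_R` is sound and refutation-complete for the fragment `R`. -/
theorem R_sound_and_refutation_complete :
    (∀ (Θ : Set Formula) (θ : Formula), Derives RuleSetR Θ θ → Entails Θ θ) ∧
    (∀ Θ : Set Formula, Θ ⊆ FragR → ¬ Satisfiable Θ →
        ∃ b, IsAbsurd b ∧ Derives RuleSetR Θ b) :=
  R_sound_and_refutation_complete'

end Syllogistic
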